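/- arXiv:1803.07128 — 5 statements merged into one kernel-verified Lean document; each statement's English description precedes it below -/
import Mathlib

section
/- Let F be a real inner product space, X a set, φ : X → F a feature map, and x_1, …, x_M ∈ X training inputs. Let C : ℝ^M → ℝ be any cost function of the model outputs and let g : ℝ → ℝ be strictly monotonically increasing on [0, ∞). Define the regularized objective J(w) = C(⟪w, φ(x_1)⟫, …, ⟪w, φ(x_M)⟫) + g(‖w‖) for w ∈ F. If w* ∈ F minimizes J over F (i.e., J(w*) ≤ J(w) for all w ∈ F), then w* lies in the linear span of {φ(x_1), …, φ(x_M)}; consequently there exist real coefficients α_1, …, α_M such that for every x ∈ X, ⟪w*, φ(x)⟫ = Σ_{m=1}^M α_m · ⟪φ(x_m), φ(x)⟫. -/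
/-!
Let `S` be the span of the feature vectors `φ (x m)` and `v` the orthogonal projection of the
minimizer `w*` onto `S`. The data term only sees `w` through inner products with vectors of `S`,
so it takes the same value at `v` and at `w*`, while `‖v‖ ≤ ‖w*‖`. Minimality and strict
monotonicity of `g` then force `‖v‖ = ‖w*‖`, which by Pythagoras means `w* = v ∈ S`.
-/

namespace Submodule

variable {𝕜 E : Type*} [RCLike 𝕜] [NormedAddCommGroup E] [InnerProductSpace 𝕜 E]
  (K : Submodule 𝕜 E) [K.HasOrthogonalProjection]

theorem inner_starProjection_left_of_mem (w : E) {y : E} (hy : y ∈ K) :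
    inner 𝕜 (K.starProjection w) y = inner 𝕜 w y := by
  rw [inner_starProjection_left_eq_right, K.starProjection_eq_self_iff.mpr hy]

theorem mem_of_le_comp_norm_starProjection {g : ℝ → ℝ} (hg : StrictMonoOn g (Set.Ici 0))
    {w : E} (hw : g ‖w‖ ≤ g ‖K.starProjection w‖) : w ∈ K := by
  have hle : ‖w‖ ≤ ‖K.starProjection w‖ :=
    (hg.le_iff_le (norm_nonneg _) (norm_nonneg _)).mp hw
  exact (K.mem_iff_norm_starProjection w).mpr
    (le_antisymm (K.norm_starProjection_apply_le w) hle)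

theorem mem_of_isMinOn_add_comp_norm {L : E → ℝ}
    (hL : ∀ w, L (K.starProjection w) = L w) {g : ℝ → ℝ} (hg : StrictMonoOn g (Set.Ici 0))
    {w₀ : E} (hmin : IsMinOn (fun w => L w + g ‖w‖) Set.univ w₀) : w₀ ∈ K := by
  have hproj := isMinOn_univ_iff.mp hmin (K.starProjection w₀)
  rw [hL] at hproj
  exact K.mem_of_le_comp_norm_starProjection hg (le_of_add_le_add_left hproj)

end Submodule

theorem exists_real_inner_eq_sum_of_mem_span_range {E ι : Type*} [NormedAddCommGroup E]
    [InnerProductSpace ℝ E] [Fintype ι] {v : ι → E} {w : E}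
    (hw : w ∈ Submodule.span ℝ (Set.range v)) :
    ∃ α : ι → ℝ, ∀ y : E, inner ℝ w y = ∑ i, α i * inner ℝ (v i) y := by
  obtain ⟨α, rfl⟩ := (Submodule.mem_span_range_iff_exists_fun ℝ).mp hw
  exact ⟨α, fun y => by simp only [sum_inner, real_inner_smul_left]⟩

/-- Representer theorem in feature-space form: a minimizer of a regularized empirical
risk (with strictly increasing norm regularizer) lies in the span of the feature vectors
of the training data, and its model admits a kernel expansion. -/
theorem representer_theorem {X : Type*} {F : Type*} [NormedAddCommGroup F]
    [InnerProductSpace ℝ F] {M : ℕ} (φ : X → F) (x : Fin M → X)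
    (C : (Fin M → ℝ) → ℝ) (g : ℝ → ℝ) (hg : StrictMonoOn g (Set.Ici 0))
    (J : F → ℝ)
    (hJ : ∀ w : F, J w = C (fun m => (inner ℝ w (φ (x m)) : ℝ)) + g ‖w‖)
    (wstar : F) (hmin : ∀ w : F, J wstar ≤ J w) :
    wstar ∈ Submodule.span ℝ (Set.range (fun m => φ (x m))) ∧
    ∃ α : Fin M → ℝ, ∀ x' : X,
      (inner ℝ wstar (φ x') : ℝ) = ∑ m : Fin M, α m * (inner ℝ (φ (x m)) (φ x') : ℝ) := by
  set S := Submodule.span ℝ (Set.range (fun m => φ (x m)))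
  have : FiniteDimensional ℝ S := FiniteDimensional.span_of_finite ℝ (Set.finite_range _)
  have hdata : ∀ w, C (fun m => inner ℝ (S.starProjection w) (φ (x m)))
      = C (fun m => inner ℝ w (φ (x m))) := fun w => by
    simp only [S.inner_starProjection_left_of_mem w (Submodule.subset_span ⟨_, rfl⟩)]
  have hmem : wstar ∈ S :=
    S.mem_of_isMinOn_add_comp_norm (L := fun w => C fun m => inner ℝ w (φ (x m))) hdata hg
      (isMinOn_univ_iff.mpr fun w => by simpa only [hJ] using hmin w)
  obtain ⟨α, hα⟩ := exists_real_inner_eq_sum_of_mem_span_range hmem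
  exact ⟨hmem, α, fun x' => hα (φ x')⟩
end

section
/- For every real number r, the series Σ_{k=0}^∞ C(2k, k) · (tanh(r)² / 4)^k converges and its sum equals cosh(r), where C(2k, k) = (2k)!/(k!)² is the central binomial coefficient. Consequently, the squeezed-vacuum coefficient sequence ψ_{r,φ} is a unit vector in ℓ²(ℕ, ℂ): Σ_{n=0}^∞ |ψ_{r,φ}(n)|² = 1. -/
/-!
The coefficients `C(2k,k) / 4^k` are the binomial coefficients `choose (k - 1/2) k`, so
`∑ C(2k,k) x^k` is the binomial series of `(1 - 4x)^(-1/2)`. At `4x = tanh² r` this is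
`(1 - tanh² r)^(-1/2) = cosh r`. Since `|ψ(2k)|² = C(2k,k) (tanh² r / 4)^k / cosh r` and the odd
coefficients vanish, the squared norms of `ψ` sum to `cosh r / cosh r = 1`.
-/

/-- The squeezed-vacuum coefficient sequence: `ψ c φ (2k) =
(cosh c)^(-1/2) · (√((2k)!)/(2^k k!)) · (-e^{iφ} tanh c)^k`, and `ψ c φ n = 0` for odd `n`. -/
noncomputable def sqVac (c φ : ℝ) : ℕ → ℂ := fun n =>
  if Even n then
    ((Real.sqrt (Real.cosh c))⁻¹ : ℂ) *
      ((Real.sqrt (Nat.factorial n) / (2 ^ (n / 2) * Nat.factorial (n / 2)) : ℝ) : ℂ) *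
      (-(Complex.exp (φ * Complex.I)) * (Real.tanh c : ℂ)) ^ (n / 2)
  else 0

open Polynomial

theorem ascPochhammer_eval_half_mul_four_pow {K : Type*} [Field K] [CharZero K] (k : ℕ) :
    (ascPochhammer K k).eval (1 / 2 : K) * 4 ^ k = k.centralBinom * k.factorial := by
  induction k with
  | zero => simp
  | succ k ih =>
    have h : ((k + 1 : ℕ) : K) * (k + 1).centralBinom = 2 * (2 * k + 1) * k.centralBinom := by
      exact_mod_cast Nat.succ_mul_centralBinom_succ k
    rw [ascPochhammer_succ_right, eval_mul]
    simp only [eval_add, eval_X, eval_natCast, Nat.factorial_succ, Nat.cast_mul, pow_succ]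
    push_cast at h ⊢
    linear_combination (2 + 4 * (k : K)) * ih - k.factorial * h

theorem Ring.choose_half_add_natCast_sub_one {K : Type*} [Field K] [CharZero K] (k : ℕ) :
    Ring.choose ((1 / 2 : K) + k - 1) k = k.centralBinom / 4 ^ k := by
  have hk : (k.factorial : K) ≠ 0 := Nat.cast_ne_zero.mpr k.factorial_ne_zero
  rw [Ring.choose_eq_smul, descPochhammer_smeval_eq_ascPochhammer, ascPochhammer_smeval_eq_eval,
    show (1 / 2 : K) + k - 1 - k + 1 = 1 / 2 by ring, smul_eq_mul,
    eq_div_iff (pow_ne_zero k (by norm_num)), mul_assoc, ascPochhammer_eval_half_mul_four_pow]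
  field_simp

theorem hasSum_centralBinom_mul_pow {x : ℝ} (hx : |x| < 1 / 4) :
    HasSum (fun k ↦ (k.centralBinom : ℝ) * x ^ k) (√(1 - 4 * x))⁻¹ := by
  have h4x : 4 * x ∈ Metric.eball (0 : ℝ) 1 := by
    rw [← ENNReal.coe_one, Metric.eball_coe, NNReal.coe_one, mem_ball_zero_iff, Real.norm_eq_abs,
      abs_mul, abs_of_pos four_pos]
    linarith
  have hbinom := (Real.one_div_one_sub_rpow_hasFPowerSeriesOnBall_zero (1 / 2)).hasSum h4x
  simp only [FormalMultilinearSeries.ofScalars_apply_eq, smul_eq_mul, zero_add,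
    Ring.choose_half_add_natCast_sub_one, ← Real.sqrt_eq_rpow] at hbinom
  have hterm : (fun k ↦ (k.centralBinom : ℝ) / 4 ^ k * (4 * x) ^ k) =
      fun k ↦ (k.centralBinom : ℝ) * x ^ k := by
    ext k
    rw [mul_pow]
    field_simp
  rwa [hterm, one_div] at hbinom

theorem Real.one_sub_tanh_sq (x : ℝ) : 1 - tanh x ^ 2 = (cosh x)⁻¹ ^ 2 := by
  rw [tanh_eq_sinh_div_cosh]
  field_simp
  linear_combination cosh_sq_sub_sinh_sq x

theorem hasSum_centralBinom_mul_tanh_sq_div_four_pow (r : ℝ) :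
    HasSum (fun k ↦ (k.centralBinom : ℝ) * (Real.tanh r ^ 2 / 4) ^ k) (Real.cosh r) := by
  have hx : |Real.tanh r ^ 2 / 4| < 1 / 4 := by
    rw [abs_of_nonneg (by positivity)]
    linarith [Real.tanh_sq_lt_one r]
  convert hasSum_centralBinom_mul_pow hx using 1
  rw [mul_div_cancel₀ _ four_ne_zero, Real.one_sub_tanh_sq,
    Real.sqrt_sq (inv_nonneg.mpr (Real.cosh_pos r).le), inv_inv]

theorem sqVac_of_not_even (c φ : ℝ) {n : ℕ} (hn : ¬Even n) : sqVac c φ n = 0 :=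
  if_neg hn

theorem Nat.centralBinom_mul_factorial_mul_factorial (k : ℕ) :
    k.centralBinom * k.factorial * k.factorial = (2 * k).factorial := by
  rw [Nat.centralBinom_eq_two_mul_choose]
  simpa [two_mul] using Nat.choose_mul_factorial_mul_factorial (Nat.le_add_left k k)

theorem norm_sqVac_two_mul_sq (c φ : ℝ) (k : ℕ) :
    ‖sqVac c φ (2 * k)‖ ^ 2 = k.centralBinom * (Real.tanh c ^ 2 / 4) ^ k / Real.cosh c := by
  have hfac : ((2 * k).factorial : ℝ) = k.centralBinom * k.factorial * k.factorial := by
    exact_mod_cast (Nat.centralBinom_mul_factorial_mul_factorial k).symm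
  rw [sqVac, if_pos (even_two_mul k), Nat.mul_div_cancel_left k two_pos]
  simp only [norm_mul, norm_pow, norm_neg, norm_inv, Complex.norm_real,
    Complex.norm_exp_ofReal_mul_I, one_mul, Real.norm_eq_abs]
  rw [abs_of_nonneg (Real.sqrt_nonneg _), abs_of_nonneg (by positivity), mul_pow, mul_pow,
    inv_pow, div_pow, ← pow_mul, mul_comm k, pow_mul, sq_abs,
    Real.sq_sqrt (Real.cosh_pos c).le, Real.sq_sqrt (by positivity), hfac]
  field_simp
  rw [show ((2 : ℝ) ^ k) ^ 2 = 4 ^ k by rw [← pow_mul, mul_comm, pow_mul]; norm_num, div_pow]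
  field_simp

/-- The series `∑ C(2k,k) (tanh² r / 4)^k` converges to `cosh r`; consequently the
squeezed-vacuum coefficient sequence is a unit vector in `ℓ²(ℕ, ℂ)`. -/
theorem sqVac_norm_one (r : ℝ) (φ : ℝ) :
    HasSum (fun k : ℕ => (Nat.centralBinom k : ℝ) * (Real.tanh r ^ 2 / 4) ^ k)
      (Real.cosh r) ∧
    HasSum (fun n : ℕ => ‖sqVac r φ n‖ ^ 2) 1 := by
  have hcosh := hasSum_centralBinom_mul_tanh_sq_div_four_pow r
  refine ⟨hcosh, ?_⟩
  have heven : HasSum (fun k ↦ ‖sqVac r φ (2 * k)‖ ^ 2) 1 := by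
    simp_rw [norm_sqVac_two_mul_sq]
    simpa [(Real.cosh_pos r).ne'] using hcosh.div_const (Real.cosh r)
  refine (Function.Injective.hasSum_iff (mul_right_injective₀ two_ne_zero) ?_).mp heven
  intro n hn
  rw [sqVac_of_not_even r φ fun ⟨k, hk⟩ ↦ hn ⟨k, by simp [hk, two_mul]⟩]
  simp
end

section
/- Let c be a nonzero real number, M ≥ 1 a natural number, and φ_1, …, φ_M real numbers such that e^{iφ_j} ≠ e^{iφ_{j'}} whenever j ≠ j' (i.e., the phases are pairwise distinct modulo 2π). Then the squeezed-vacuum coefficient sequences ψ_{c,φ_1}, …, ψ_{c,φ_M}, viewed as elements of the complex vector space of functions ℕ → ℂ, are linearly independent over ℂ. -/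
/-- Proposition 2: squeezed-vacuum coefficient sequences with fixed nonzero squeezing
strength and pairwise distinct phases (mod 2π) are linearly independent over ℂ. -/
theorem sqVac_linearIndependent (c : ℝ) (hc : c ≠ 0) (M : ℕ) (hM : 1 ≤ M)
    (φ : Fin M → ℝ)
    (hφ : ∀ j j' : Fin M, j ≠ j' →
      Complex.exp ((φ j : ℝ) * Complex.I) ≠ Complex.exp ((φ j' : ℝ) * Complex.I)) :
    LinearIndependent ℂ (fun j : Fin M => sqVac c (φ j)) := by
  rw [Fintype.linearIndependent_iff]
  intro g hg j0
  set r : Fin M → ℂ := fun j => -(Complex.exp ((φ j : ℝ) * Complex.I)) * (Real.tanh c : ℂ)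
    with hrdef
  have htanh : (Real.tanh c : ℂ) ≠ 0 := by
    have : Real.tanh c ≠ 0 := by
      rw [Real.tanh_eq_sinh_div_cosh]
      exact div_ne_zero (Real.sinh_ne_zero.2 hc) (ne_of_gt (Real.cosh_pos c))
    exact_mod_cast this
  have hrinj : Function.Injective r := by
    intro j j' h
    by_contra hne
    apply hφ j j' hne
    have := mul_right_cancel₀ htanh h
    exact neg_injective this
  -- The common nonzero factors
  have hC : ((Real.sqrt (Real.cosh c))⁻¹ : ℂ) ≠ 0 := by
    have : Real.sqrt (Real.cosh c) ≠ 0 :=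
      ne_of_gt (Real.sqrt_pos.2 (Real.cosh_pos c))
    simpa using (inv_ne_zero (by exact_mod_cast this : ((Real.sqrt (Real.cosh c) : ℝ) : ℂ) ≠ 0))
  have ha : ∀ k : ℕ,
      ((Real.sqrt (Nat.factorial (2 * k)) / (2 ^ k * Nat.factorial k) : ℝ) : ℂ) ≠ 0 := by
    intro k
    have hnum : Real.sqrt (Nat.factorial (2 * k)) ≠ 0 :=
      ne_of_gt (Real.sqrt_pos.2 (by exact_mod_cast Nat.factorial_pos (2 * k)))
    have hden : ((2 : ℝ) ^ k * Nat.factorial k) ≠ 0 := by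
      positivity
    exact_mod_cast div_ne_zero hnum hden
  have key : ∀ k : ℕ, ∑ j, g j * r j ^ k = 0 := by
    intro k
    have h1 := congrFun hg (2 * k)
    have heven : Even (2 * k) := even_two_mul k
    have hdiv : 2 * k / 2 = k := by omega
    simp only [Finset.sum_apply, Pi.smul_apply, smul_eq_mul, Pi.zero_apply, sqVac,
      if_pos heven, hdiv] at h1
    have h2 : (((Real.sqrt (Real.cosh c))⁻¹ : ℂ) *
        ((Real.sqrt (Nat.factorial (2 * k)) / (2 ^ k * Nat.factorial k) : ℝ) : ℂ)) *
        ∑ j, g j * r j ^ k = 0 := by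
      rw [Finset.mul_sum, ← h1]
      refine Finset.sum_congr rfl fun j _ => ?_
      simp [hrdef]
      ring
    rcases mul_eq_zero.1 h2 with h3 | h3
    · exact absurd h3 (mul_ne_zero hC (ha k))
    · exact h3
  -- Lagrange interpolation argument
  set p : Polynomial ℂ := Lagrange.basis Finset.univ r j0 with hp
  have hinjOn : Set.InjOn r (Finset.univ : Finset (Fin M)) := hrinj.injOn
  have heval : ∀ j, p.eval (r j) = if j = j0 then 1 else 0 := by
    intro j
    by_cases h : j = j0
    · subst h
      simp [hp, Lagrange.eval_basis_self hinjOn (Finset.mem_univ j)]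
    · simp [hp, Lagrange.eval_basis_of_ne (Ne.symm h) (Finset.mem_univ j), h]
  have : g j0 = ∑ j, g j * p.eval (r j) := by
    rw [Finset.sum_congr rfl fun j _ => by rw [heval j]]
    simp
  rw [this]
  have hexpand : ∀ j, p.eval (r j) =
      ∑ k ∈ Finset.range (p.natDegree + 1), p.coeff k * r j ^ k := fun j =>
    Polynomial.eval_eq_sum_range _
  calc ∑ j, g j * p.eval (r j)
      = ∑ j, ∑ k ∈ Finset.range (p.natDegree + 1), p.coeff k * (g j * r j ^ k) := by
        refine Finset.sum_congr rfl fun j _ => ?_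
        rw [hexpand j, Finset.mul_sum]
        exact Finset.sum_congr rfl fun k _ => by ring
    _ = ∑ k ∈ Finset.range (p.natDegree + 1), p.coeff k * ∑ j, g j * r j ^ k := by
        rw [Finset.sum_comm]
        exact Finset.sum_congr rfl fun k _ => by rw [Finset.mul_sum]
    _ = 0 := by simp [key]
end

section
/- Let c be a nonzero real number, and let N ≥ 1, M ≥ 1 be natural numbers. Let φ^1, …, φ^M ∈ ℝ^N be pairwise distinct vectors whose components all lie in the half-open interval [0, 2π). For each m, define the multimode sequence Ψ_m : (Fin N → ℕ) → ℂ by Ψ_m(n) = Π_{i=1}^N ψ_{c, φ^m_i}(n_i). Then Ψ_1, …, Ψ_M, viewed as elements of the complex vector space of functions (Fin N → ℕ) → ℂ, are linearly independent over ℂ. -/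
/-- exp(aI) = exp(bI) for a, b in [0, 2π) implies a = b. -/
lemma exp_mul_I_inj_aux {a b : ℝ} (ha : a ∈ Set.Ico 0 (2 * Real.pi))
    (hb : b ∈ Set.Ico 0 (2 * Real.pi))
    (h : Complex.exp (a * Complex.I) = Complex.exp (b * Complex.I)) : a = b := by
  rw [Complex.exp_eq_exp_iff_exists_int] at h
  obtain ⟨n, hn⟩ := h
  have hI : (Complex.I : ℂ) ≠ 0 := Complex.I_ne_zero
  have h2' : (a : ℂ) * Complex.I = ((b : ℂ) + (n : ℂ) * (2 * (Real.pi : ℂ))) * Complex.I := by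
    linear_combination hn
  have h2 : (a : ℂ) = (b : ℂ) + (n : ℂ) * (2 * (Real.pi : ℂ)) := mul_right_cancel₀ hI h2'
  have h3 : a = b + n * (2 * Real.pi) := by exact_mod_cast h2
  have hπ := Real.pi_pos
  have hn0 : n = 0 := by
    rcases lt_trichotomy n 0 with h' | h' | h'
    · have hn1 : n ≤ -1 := by omega
      have : (n : ℝ) ≤ -1 := by exact_mod_cast hn1
      nlinarith [ha.1, hb.2]
    · exact h'
    · have : (1 : ℝ) ≤ n := by exact_mod_cast h'
      nlinarith [ha.2, hb.1]
  rw [hn0] at h3; simpa using h3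

/-- Multivariate monomial character. -/
noncomputable def charHom {N : ℕ} (z : Fin N → ℂ) : Multiplicative (Fin N → ℕ) →* ℂ where
  toFun k := ∏ i, z i ^ (Multiplicative.toAdd k i)
  map_one' := by simp
  map_mul' a b := by
    simp [toAdd_mul, Pi.add_apply, pow_add, Finset.prod_mul_distrib]

lemma charHom_inj {N : ℕ} : Function.Injective (charHom (N := N)) := by
  intro z1 z2 h
  funext i
  have := DFunLike.congr_fun h (Multiplicative.ofAdd (Pi.single i 1))
  simp only [charHom, MonoidHom.coe_mk, OneHom.coe_mk, toAdd_ofAdd] at this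
  rw [Finset.prod_eq_single i (fun j _ hj => by simp [Pi.single_apply, hj])
      (fun hi => absurd (Finset.mem_univ i) hi),
    Finset.prod_eq_single i (fun j _ hj => by simp [Pi.single_apply, hj])
      (fun hi => absurd (Finset.mem_univ i) hi)] at this
  simpa using this

/-- Multimode extension of Proposition 2: for pairwise distinct phase vectors with
components in `[0, 2π)`, the multimode squeezed-vacuum coefficient functions
`n ↦ ∏ i, ψ_{c, φ^m_i}(n_i)` are linearly independent over ℂ. -/
theorem multimode_sqVac_linearIndependent (c : ℝ) (hc : c ≠ 0) (N M : ℕ)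
    (hN : 1 ≤ N) (hM : 1 ≤ M) (φ : Fin M → Fin N → ℝ)
    (hrange : ∀ m : Fin M, ∀ i : Fin N, φ m i ∈ Set.Ico 0 (2 * Real.pi))
    (hdist : Function.Injective φ) :
    LinearIndependent ℂ
      (fun m : Fin M => fun n : Fin N → ℕ => ∏ i : Fin N, sqVac c (φ m i) (n i)) := by
  have hT : (Real.tanh c : ℂ) ≠ 0 := by
    simp only [ne_eq, Complex.ofReal_eq_zero]
    rw [Real.tanh_eq_sinh_div_cosh]
    exact div_ne_zero (by rwa [ne_eq, Real.sinh_eq_zero]) (Real.cosh_pos c).ne'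
  set z : Fin M → Fin N → ℂ :=
    fun m i => -(Complex.exp (φ m i * Complex.I)) * (Real.tanh c : ℂ) with hz
  have hzinj : Function.Injective z := by
    intro m1 m2 h
    apply hdist
    funext i
    have h1 : z m1 i = z m2 i := by rw [h]
    simp only [hz] at h1
    have hexp : Complex.exp (φ m1 i * Complex.I) = Complex.exp (φ m2 i * Complex.I) := by
      have := mul_right_cancel₀ hT h1
      simpa using this
    exact exp_mul_I_inj_aux (hrange m1 i) (hrange m2 i) hexp
  have hinj : Function.Injective (fun m => charHom (z m)) :=
    fun m1 m2 h => hzinj (charHom_inj h)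
  have hli : LinearIndependent ℂ (fun m : Fin M => ⇑(charHom (z m))) :=
    (linearIndependent_monoidHom (Multiplicative (Fin N → ℕ)) ℂ).comp _ hinj
  rw [Fintype.linearIndependent_iff] at hli ⊢
  intro g hg m
  apply hli g _ m
  funext k
  -- evaluate hg at the doubled index
  have hgk := congrFun hg (fun i => 2 * (Multiplicative.toAdd k i))
  simp only [Finset.sum_apply, Pi.smul_apply, Pi.zero_apply, smul_eq_mul] at hgk
  -- constant factor
  set A : ℂ := ∏ i : Fin N, (((Real.sqrt (Real.cosh c))⁻¹ : ℂ) *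
      ((Real.sqrt (Nat.factorial (2 * Multiplicative.toAdd k i)) /
        (2 ^ (Multiplicative.toAdd k i) * Nat.factorial (Multiplicative.toAdd k i)) : ℝ) : ℂ))
    with hA
  have hAne : A ≠ 0 := by
    rw [hA]
    apply Finset.prod_ne_zero_iff.mpr
    intro i _
    apply mul_ne_zero
    · simp only [ne_eq, inv_eq_zero, Complex.ofReal_eq_zero]
      exact (Real.sqrt_pos.mpr (Real.cosh_pos c)).ne'
    · simp only [ne_eq, Complex.ofReal_eq_zero]
      apply ne_of_gt
      apply div_pos
      · exact Real.sqrt_pos.mpr (by exact_mod_cast (Nat.factorial_pos _))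
      · positivity
  have key : ∀ m : Fin M,
      (∏ i : Fin N, sqVac c (φ m i) (2 * Multiplicative.toAdd k i)) =
        A * charHom (z m) k := by
    intro m'
    simp only [hA, charHom, MonoidHom.coe_mk, OneHom.coe_mk]
    rw [← Finset.prod_mul_distrib]
    apply Finset.prod_congr rfl
    intro i _
    simp only [sqVac]
    rw [if_pos (even_two_mul _), Nat.mul_div_cancel_left _ (by norm_num : 0 < 2)]
  simp only [key] at hgk
  have : A * ∑ m' : Fin M, g m' * charHom (z m') k = 0 := by
    rw [Finset.mul_sum]
    rw [← hgk]
    apply Finset.sum_congr rfl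
    intro m' _
    ring
  have hsum := (mul_eq_zero.mp this).resolve_left hAne
  simpa [Finset.sum_apply, Pi.smul_apply, smul_eq_mul] using hsum
end

section
/- Let c be a nonzero real number, M ≥ 1 a natural number, and φ_1, …, φ_M real numbers such that e^{iφ_j} ≠ e^{iφ_{j'}} whenever j ≠ j'. Regard each squeezed-vacuum coefficient sequence ψ_{c,φ_m} as an element of the Hilbert space ℓ²(ℕ, ℂ). Then for every labeling y : Fin M → ℝ with y_m ∈ {−1, +1} for all m, there exist w ∈ ℓ²(ℕ, ℂ) and b ∈ ℝ such that Re ⟪ψ_{c,φ_m}, w⟫ + b = y_m for all m; in particular, the feature-mapped data are linearly separable in Fock space. -/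
/-! The even coefficients of a squeezed vacuum are `ψ(2k) = a_k r^k` with `a_k > 0` independent of
the phase and `r = -e^{iφ} tanh c`. Pairing `ψ` with the finitely supported weight whose `2k`-th
entry is `p_k / a_k` therefore evaluates the polynomial `p` at `conj r`. For `c ≠ 0`, distinct
phases give distinct nodes `conj r_m`, so Lagrange interpolation produces a `p`, and hence a
weight, realizing any prescribed real labels exactly. -/

open Polynomial ComplexConjugate

noncomputable def sqVacRatio (c φ : ℝ) : ℂ := -Complex.exp (φ * Complex.I) * (Real.tanh c : ℂ)

noncomputable def sqVacAmp (c : ℝ) (k : ℕ) : ℝ :=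
  (√(Real.cosh c))⁻¹ * (√((2 * k).factorial) / (2 ^ k * k.factorial))

lemma sqVacAmp_pos (c : ℝ) (k : ℕ) : 0 < sqVacAmp c k := by
  unfold sqVacAmp
  have := Real.cosh_pos c
  have := (2 * k).factorial_pos
  positivity

lemma sqVac_two_mul (c φ : ℝ) (k : ℕ) :
    sqVac c φ (2 * k) = sqVacAmp c k * sqVacRatio c φ ^ k := by
  simp only [sqVac, sqVacAmp, sqVacRatio, even_two_mul, if_true,
    Nat.mul_div_cancel_left k two_pos]
  push_cast
  ring

lemma sqVacRatio_eq_sqVacRatio_iff {c : ℝ} (hc : c ≠ 0) {φ φ' : ℝ} :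
    sqVacRatio c φ = sqVacRatio c φ' ↔
      Complex.exp (φ * Complex.I) = Complex.exp (φ' * Complex.I) := by
  have htanh : (Real.tanh c : ℂ) ≠ 0 := by
    rw [Complex.ofReal_ne_zero, Real.tanh_eq_sinh_div_cosh]
    exact div_ne_zero (Real.sinh_ne_zero.mpr hc) (Real.cosh_pos c).ne'
  rw [sqVacRatio, sqVacRatio, mul_left_inj' htanh, neg_inj]

noncomputable def polyWeight (c : ℝ) (p : ℂ[X]) : ℕ → ℂ := fun n =>
  if Even n then p.coeff (n / 2) / sqVacAmp c (n / 2) else 0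

lemma polyWeight_two_mul (c : ℝ) (p : ℂ[X]) (k : ℕ) :
    polyWeight c p (2 * k) = p.coeff k / sqVacAmp c k := by
  simp [polyWeight]

lemma memℓp_polyWeight (c : ℝ) (p : ℂ[X]) : Memℓp (polyWeight c p) 2 := by
  refine Memℓp.of_exponent_ge (memℓp_zero ?_) (by norm_num)
  refine ((p.support.finite_toSet).image (2 * ·)).subset fun n hn => ?_
  obtain ⟨⟨k, rfl⟩, hk⟩ : Even n ∧ p.coeff (n / 2) ≠ 0 := by
    by_contra h
    exact hn (by grind [polyWeight])
  exact ⟨k, by simpa [← two_mul] using hk, by ring⟩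

lemma tsum_conj_sqVac_mul_polyWeight (c φ : ℝ) (p : ℂ[X]) :
    ∑' n, conj (sqVac c φ n) * polyWeight c p n = p.eval (conj (sqVacRatio c φ)) := by
  have hodd : (Function.support fun n => conj (sqVac c φ n) * polyWeight c p n) ⊆
      Set.range (2 * ·) := fun n hn => by
    by_contra h
    have hn' : ¬ Even n := fun ⟨k, hk⟩ => h ⟨k, show 2 * k = n by omega⟩
    exact hn (by simp [polyWeight, hn'])
  rw [← (mul_right_injective₀ two_ne_zero).tsum_eq hodd, eval_eq_sum_range,
    tsum_eq_sum (s := Finset.range (p.natDegree + 1))]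
  · refine Finset.sum_congr rfl fun k _ => ?_
    rw [sqVac_two_mul, polyWeight_two_mul, map_mul, map_pow, Complex.conj_ofReal]
    field_simp [(sqVacAmp_pos c k).ne']
  · intro k hk
    rw [polyWeight_two_mul, coeff_eq_zero_of_natDegree_lt (by simpa using hk), zero_div, mul_zero]

theorem sqVac_linearly_separable_general (c : ℝ) (hc : c ≠ 0) (M : ℕ)
    (φ : Fin M → ℝ)
    (hφ : ∀ j j' : Fin M, j ≠ j' →
      Complex.exp ((φ j : ℝ) * Complex.I) ≠ Complex.exp ((φ j' : ℝ) * Complex.I))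
    (y : Fin M → ℝ) :
    ∃ w : ℕ → ℂ, Memℓp w 2 ∧ ∃ b : ℝ,
      ∀ m : Fin M,
        (∑' n : ℕ, (starRingEnd ℂ) (sqVac c (φ m) n) * w n).re + b = y m := by
  set x : Fin M → ℂ := fun m => conj (sqVacRatio c (φ m))
  have hx : Function.Injective x := fun j j' h => by
    by_contra hne
    exact hφ j j' hne ((sqVacRatio_eq_sqVacRatio_iff hc).mp ((starRingEnd ℂ).injective h))
  refine ⟨polyWeight c (Lagrange.interpolate .univ x (fun m => y m)), memℓp_polyWeight _ _, 0,
    fun m => ?_⟩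
  rw [tsum_conj_sqVac_mul_polyWeight,
    Lagrange.eval_interpolate_at_node _ hx.injOn (Finset.mem_univ m)]
  simp

/-- Squeezed-vacuum feature vectors with fixed nonzero squeezing strength and pairwise
distinct phases (mod 2π) are linearly separable in Fock space: any ±1 labeling can be
realized exactly by an affine functional `Re ⟪ψ_m, w⟫ + b` with `w ∈ ℓ²(ℕ, ℂ)`. -/
theorem sqVac_linearly_separable (c : ℝ) (hc : c ≠ 0) (M : ℕ) (hM : 1 ≤ M)
    (φ : Fin M → ℝ)
    (hφ : ∀ j j' : Fin M, j ≠ j' →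
      Complex.exp ((φ j : ℝ) * Complex.I) ≠ Complex.exp ((φ j' : ℝ) * Complex.I))
    (y : Fin M → ℝ) (hy : ∀ m : Fin M, y m = -1 ∨ y m = 1) :
    ∃ w : ℕ → ℂ, Memℓp w 2 ∧ ∃ b : ℝ,
      ∀ m : Fin M,
        (∑' n : ℕ, (starRingEnd ℂ) (sqVac c (φ m) n) * w n).re + b = y m :=
  sqVac_linearly_separable_general c hc M φ hφ y
end
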